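/- arXiv:1411.5900 — 3 statements merged into one kernel-verified Lean document; each statement's English description precedes it below -/
import Mathlib

section
/- Let (S, Ω, P) be a probability space and X_n : S → {0,1} a sequence of random variables with p_n := P(X_n = 1) and p_{i,j} := P(X_i X_j = 1). Suppose (1) ∑ p_n = ∞; (2) there is a function ψ : ℕ → ℝ such that for all m > 0, sup_n |p_{n,n+m} − p_n p_{n+m}| ≤ ψ(m); and (3) (∑_{m=1}^n ψ(m)(n−m)) / (∑_{i=1}^n p_i)² → 0 as n → ∞. Then P(∑_n X_n = ∞) = 1. -/
/-!
Let `N n = X 1 + ⋯ + X n`. Its mean is `a n = ∑ p i`, and bounding the covariances by `p i` on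
the diagonal and by `ψ (j - i)` off it gives `Var (N n) ≤ a n + 2 ∑ ψ m (n - m)`, so
`Var (N n) / (a n)² → 0`. By Chebyshev, `P (N n ≤ a n / 2) → 0`; hence for every `M` the event
`∀ n, N n ≤ M` is null, the partial sums are almost surely unbounded, and infinitely many `X n`
equal `1`.
-/

open MeasureTheory ProbabilityTheory Filter Finset Topology

lemma sum_Icc_sum_Icc_le_of_symm {c : ℕ → ℕ → ℝ} {d ψ : ℕ → ℝ} (hsymm : ∀ i j, c i j = c j i)
    (hdiag : ∀ i, c i i ≤ d i) (hoff : ∀ m > 0, ∀ i, c i (i + m) ≤ ψ m) (n : ℕ) :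
    ∑ i ∈ Icc 1 n, ∑ j ∈ Icc 1 n, c i j ≤
      ∑ i ∈ Icc 1 n, d i + 2 * ∑ m ∈ Icc 1 n, ψ m * ((n : ℝ) - m) := by
  induction n with
  | zero => simp
  | succ n ih =>
    have hsplit : ∑ i ∈ Icc 1 (n + 1), ∑ j ∈ Icc 1 (n + 1), c i j =
        ∑ i ∈ Icc 1 n, ∑ j ∈ Icc 1 n, c i j + 2 * ∑ i ∈ Icc 1 n, c i (n + 1) +
          c (n + 1) (n + 1) := by
      simp only [sum_Icc_succ_top (Nat.le_add_left 1 n), sum_add_distrib, hsymm (n + 1)]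
      ring
    have hlast : ∑ i ∈ Icc 1 n, c i (n + 1) ≤ ∑ m ∈ Icc 1 n, ψ m :=
      calc ∑ i ∈ Icc 1 n, c i (n + 1)
          ≤ ∑ i ∈ Icc 1 n, ψ (n + 1 - i) := sum_le_sum fun i hi => by
            have hi := mem_Icc.mp hi
            have := hoff (n + 1 - i) (by omega) i
            rwa [Nat.add_sub_cancel' (by omega)] at this
        _ = ∑ m ∈ Icc 1 n, ψ m :=
          sum_nbij' (fun i => n + 1 - i) (fun i => n + 1 - i)
            (fun i hi => by simp only [mem_Icc] at hi ⊢; omega)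
            (fun i hi => by simp only [mem_Icc] at hi ⊢; omega)
            (fun i hi => by simp only [mem_Icc] at hi; omega)
            (fun i hi => by simp only [mem_Icc] at hi; omega) fun _ _ => rfl
    have hweights : ∑ m ∈ Icc 1 (n + 1), ψ m * (((n + 1 : ℕ) : ℝ) - m) =
        ∑ m ∈ Icc 1 n, ψ m * ((n : ℝ) - m) + ∑ m ∈ Icc 1 n, ψ m := by
      rw [sum_Icc_succ_top (Nat.le_add_left 1 n), ← sum_add_distrib]
      push_cast
      simp only [sub_self, mul_zero, add_zero]
      exact sum_congr rfl fun m _ => by ring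
    rw [hsplit, hweights, sum_Icc_succ_top (Nat.le_add_left 1 n)]
    linarith [hdiag (n + 1)]

lemma tendsto_div_sq_of_le_add_two_mul {ι : Type*} {l : Filter ι} {a T v : ι → ℝ}
    (ha : Tendsto a l atTop) (hT : Tendsto (fun n => T n / a n ^ 2) l (𝓝 0))
    (hv_nonneg : ∀ n, 0 ≤ v n) (hv : ∀ n, v n ≤ a n + 2 * T n) :
    Tendsto (fun n => v n / a n ^ 2) l (𝓝 0) := by
  have hbound : Tendsto (fun n => (a n)⁻¹ + 2 * (T n / a n ^ 2)) l (𝓝 0) := by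
    simpa using ha.inv_tendsto_atTop.add (hT.const_mul 2)
  refine tendsto_of_tendsto_of_tendsto_of_le_of_le' tendsto_const_nhds hbound
    (Eventually.of_forall fun n => div_nonneg (hv_nonneg n) (sq_nonneg _)) ?_
  filter_upwards [ha.eventually_gt_atTop 0] with n hn
  calc v n / a n ^ 2 ≤ (a n + 2 * T n) / a n ^ 2 := by gcongr; exact hv n
    _ = (a n)⁻¹ + 2 * (T n / a n ^ 2) := by field_simp

lemma bddAbove_range_sum_Icc_of_finite_support {x : ℕ → ℝ} (hx : 0 ≤ x)
    (hfin : (Function.support x).Finite) :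
    BddAbove (Set.range fun n => ∑ i ∈ Icc 1 n, x i) := by
  have hsum : Summable x :=
    summable_of_ne_finset_zero (s := hfin.toFinset) fun i hi => by simpa using hi
  exact ⟨∑' i, x i, Set.forall_mem_range.2 fun n => hsum.sum_le_tsum _ fun i _ => hx i⟩

section

variable {Ω : Type*} [MeasurableSpace Ω] {μ : Measure Ω} {f g : Ω → ℝ} {S : ℕ → Ω → ℝ}

lemma memLp_of_zero_or_one [IsFiniteMeasure μ] (hf : Measurable f)
    (h01 : ∀ ω, f ω = 0 ∨ f ω = 1) (p : ENNReal) : MemLp f p μ :=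
  memLp_of_bounded (a := 0) (b := 1)
    (ae_of_all _ fun ω => by rcases h01 ω with h | h <;> simp [h]) hf.aestronglyMeasurable p

lemma integral_eq_measureReal_of_zero_or_one (hf : Measurable f)
    (h01 : ∀ ω, f ω = 0 ∨ f ω = 1) : ∫ ω, f ω ∂μ = μ.real {ω | f ω = 1} := by
  have hind : f = {ω | f ω = 1}.indicator 1 := by
    ext ω
    rcases h01 ω with h | h <;> simp [Set.indicator, h]
  conv_lhs => rw [hind]
  exact integral_indicator_one (hf (measurableSet_singleton 1))

lemma covariance_of_zero_or_one [IsProbabilityMeasure μ] (hf : Measurable f) (hg : Measurable g)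
    (hf01 : ∀ ω, f ω = 0 ∨ f ω = 1) (hg01 : ∀ ω, g ω = 0 ∨ g ω = 1) :
    cov[f, g; μ] = μ.real {ω | f ω * g ω = 1} - μ.real {ω | f ω = 1} * μ.real {ω | g ω = 1} := by
  have hfg01 : ∀ ω, f ω * g ω = 0 ∨ f ω * g ω = 1 := fun ω => by
    rcases hf01 ω with h | h <;> rcases hg01 ω with h' | h' <;> simp [h, h']
  rw [covariance_eq_sub (memLp_of_zero_or_one hf hf01 2) (memLp_of_zero_or_one hg hg01 2)]
  simp only [Pi.mul_apply]
  rw [integral_eq_measureReal_of_zero_or_one (by fun_prop) hfg01,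
    integral_eq_measureReal_of_zero_or_one hf hf01, integral_eq_measureReal_of_zero_or_one hg hg01]

lemma covariance_self_le_of_zero_or_one [IsProbabilityMeasure μ] (hf : Measurable f)
    (h01 : ∀ ω, f ω = 0 ∨ f ω = 1) : cov[f, f; μ] ≤ μ.real {ω | f ω = 1} := by
  have hsq : {ω | f ω * f ω = 1} = {ω | f ω = 1} := by
    ext ω
    rcases h01 ω with h | h <;> simp [h]
  rw [covariance_of_zero_or_one hf hf h01 h01, hsq]
  nlinarith [sq_nonneg (μ.real {ω | f ω = 1})]

lemma measure_forall_le_eq_zero_of_variance_div_sq_tendsto_zero [IsFiniteMeasure μ]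
    (hS : ∀ n, MemLp (S n) 2 μ) (hmean : Tendsto (fun n => μ[S n]) atTop atTop)
    (hvar : Tendsto (fun n => Var[S n; μ] / μ[S n] ^ 2) atTop (𝓝 0)) (M : ℝ) :
    μ {ω | ∀ n, S n ω ≤ M} = 0 := by
  have hbound :
      Tendsto (fun n => ENNReal.ofReal (4 * (Var[S n; μ] / μ[S n] ^ 2))) atTop (𝓝 0) := by
    simpa using ENNReal.tendsto_ofReal (hvar.const_mul 4)
  refine le_antisymm (ge_of_tendsto hbound ?_) zero_le
  filter_upwards [hmean.eventually_ge_atTop (2 * M), hmean.eventually_gt_atTop 0] with n hM hpos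
  calc μ {ω | ∀ n, S n ω ≤ M}
      ≤ μ {ω | μ[S n] / 2 ≤ |S n ω - μ[S n]|} := measure_mono fun ω hω => by
        have := hω n
        show μ[S n] / 2 ≤ |S n ω - μ[S n]|
        exact le_trans (by linarith) (neg_le_abs _)
    _ ≤ ENNReal.ofReal (Var[S n; μ] / (μ[S n] / 2) ^ 2) :=
        meas_ge_le_variance_div_sq (hS n) (by linarith)
    _ = ENNReal.ofReal (4 * (Var[S n; μ] / μ[S n] ^ 2)) := by
        congr 1; field_simp; ring

lemma ae_not_bddAbove_of_variance_div_sq_tendsto_zero [IsFiniteMeasure μ]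
    (hS : ∀ n, MemLp (S n) 2 μ) (hmean : Tendsto (fun n => μ[S n]) atTop atTop)
    (hvar : Tendsto (fun n => Var[S n; μ] / μ[S n] ^ 2) atTop (𝓝 0)) :
    ∀ᵐ ω ∂μ, ¬ BddAbove (Set.range fun n => S n ω) := by
  rw [ae_iff]
  refine measure_mono_null (fun ω hω => ?_)
    (measure_iUnion_null fun M : ℕ =>
      measure_forall_le_eq_zero_of_variance_div_sq_tendsto_zero hS hmean hvar M)
  obtain ⟨M, hM⟩ := not_not.mp hω
  obtain ⟨K, hK⟩ := exists_nat_ge M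
  exact Set.mem_iUnion.2 ⟨K, fun n => (hM ⟨n, rfl⟩).trans hK⟩

end

/-- Quasi-independent generalization of the second Borel–Cantelli lemma. -/
theorem generalized_borel_cantelli
    {S : Type*} [MeasurableSpace S] (P : Measure S) [IsProbabilityMeasure P]
    (X : ℕ → S → ℝ) (hmeas : ∀ n, Measurable (X n))
    (h01 : ∀ n s, X n s = 0 ∨ X n s = 1)
    (p : ℕ → ℝ) (hp : ∀ n, p n = (P {s | X n s = 1}).toReal)
    (p2 : ℕ → ℕ → ℝ) (hp2 : ∀ i j, p2 i j = (P {s | X i s * X j s = 1}).toReal)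
    (hdiv : Tendsto (fun n => ∑ i ∈ Finset.Icc 1 n, p i) atTop atTop)
    (ψ : ℕ → ℝ)
    (hψ : ∀ m > 0, ∀ n, |p2 n (n + m) - p n * p (n + m)| ≤ ψ m)
    (hlim : Tendsto
      (fun n => (∑ m ∈ Finset.Icc 1 n, ψ m * ((n : ℝ) - m)) /
        (∑ i ∈ Finset.Icc 1 n, p i) ^ 2) atTop (nhds 0)) :
    P {s | {n : ℕ | X n s = 1}.Infinite} = 1 := by
  set N : ℕ → S → ℝ := fun n s => ∑ i ∈ Icc 1 n, X i s
  have hX : ∀ n, MemLp (X n) 2 P := fun n => memLp_of_zero_or_one (hmeas n) (h01 n) 2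
  have hN : ∀ n, MemLp (N n) 2 P := fun n => memLp_finsetSum _ fun i _ => hX i
  have hmean : ∀ n, P[N n] = ∑ i ∈ Icc 1 n, p i := fun n => by
    rw [integral_finsetSum _ fun i _ => (hX i).integrable one_le_two]
    exact sum_congr rfl fun i _ => by
      rw [hp, integral_eq_measureReal_of_zero_or_one (hmeas i) (h01 i), measureReal_def]
  have hcov : ∀ i j, cov[X i, X j; P] = p2 i j - p i * p j := fun i j => by
    rw [covariance_of_zero_or_one (hmeas i) (hmeas j) (h01 i) (h01 j), hp, hp, hp2]
    simp only [measureReal_def]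
  have hvar : ∀ n,
      Var[N n; P] ≤ ∑ i ∈ Icc 1 n, p i + 2 * ∑ m ∈ Icc 1 n, ψ m * ((n : ℝ) - m) := by
    intro n
    rw [variance_fun_sum' fun i _ => hX i]
    refine sum_Icc_sum_Icc_le_of_symm (fun i j => covariance_comm _ _)
      (fun i => (covariance_self_le_of_zero_or_one (hmeas i) (h01 i)).trans_eq (hp i).symm)
      (fun m hm i => hcov i (i + m) ▸ (le_abs_self _).trans (hψ m hm i)) n
  have hvar_div := tendsto_div_sq_of_le_add_two_mul hdiv hlim (fun n => variance_nonneg _ _) hvar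
  simp only [← hmean] at hdiv hvar_div
  have hunbdd := ae_not_bddAbove_of_variance_div_sq_tendsto_zero hN hdiv hvar_div
  have hinf : ∀ᵐ s ∂P, {n : ℕ | X n s = 1}.Infinite := by
    filter_upwards [hunbdd] with s hs hfin
    refine hs (bddAbove_range_sum_Icc_of_finite_support (fun i => ?_) (hfin.subset fun i hi => ?_))
    · rcases h01 i s with h | h <;> simp [h]
    · exact (h01 i s).resolve_left hi
  exact (measure_congr (ae_eq_univ.2 (ae_iff.1 hinf))).trans measure_univ
end

section
/- Let (X, d) be a metric space with probability measure μ and T a μ-preserving ergodic transformation such that C₁ e^{−kt} ≤ μ{x : d(x, y) > t} ≤ C₂ e^{−kt} for all t > 0, and suppose the 0-1 random variables X_n = 1_{d(T^n x, y) > r_n} with r_n = (γ/k) log n satisfy |P(X_n X_{n+m} = 1) − P(X_n = 1)P(X_{n+m} = 1)| ≤ C P(X_n=1) P(X_{n+m}=1) m^{−β} for some C > 0 and 0 < β < 1. Then for μ-almost every x, limsup_{n→∞} d(T^n x, y)/log n ≥ β/(2k). -/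
/-!
The excursion events `A n = {x | dist (T^[n] x) y > γ / k * log n}` have measure at least
`C₁ n^(-γ)`, so the visit count `S N = ∑_{n<N} 1_{A n}` has mean `≳ N^(1-γ)`, while the decay of
correlations bounds its variance by `O(N^(2-β))`. For `2γ < β` Chebyshev's inequality makes
`μ {S N < 𝔼[S N] / 2}` tend to zero, summably along a sparse sequence of `N`, so by Borel–Cantelli
almost every `x` visits infinitely many `A n`, i.e. `limsup dist (T^[n] x) y / log n ≥ γ / k`.
Letting `γ ↑ β / 2` gives the bound. The upper tail, again through Borel–Cantelli, keeps
`dist (T^[n] x) y / log n` bounded above; without that, `limsup` in `ℝ` would be a junk value.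
-/

open MeasureTheory Filter ProbabilityTheory Topology

lemma sum_Icc_rpow_neg_le {b : ℝ} (hb0 : 0 ≤ b) (hb1 : b < 1) (N : ℕ) :
    ∑ d ∈ Finset.Icc 1 N, (d : ℝ) ^ (-b) ≤ (N : ℝ) ^ (1 - b) / (1 - b) := by
  have hb : 0 < 1 - b := by linarith
  rcases N with _ | N
  · simp [Real.zero_rpow hb.ne']
  have hanti : AntitoneOn (fun t : ℝ ↦ t ^ (-b)) (Set.Icc 1 (1 + N)) := fun s hs t _ hst ↦
    Real.rpow_le_rpow_of_nonpos (zero_lt_one.trans_le hs.1) hst (neg_nonpos.2 hb0)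
  have hint := hanti.sum_le_integral
  rw [integral_rpow (Or.inl (by linarith)), Real.one_rpow] at hint
  have hsplit : ∑ d ∈ Finset.Icc 1 (N + 1), (d : ℝ) ^ (-b) =
      1 + ∑ i ∈ Finset.range N, ((1 : ℝ) + ↑(i + 1)) ^ (-b) := by
    rw [← Finset.Ico_add_one_right_eq_Icc, Finset.sum_Ico_eq_sum_range, Nat.add_sub_cancel,
      Finset.sum_range_succ']
    push_cast
    simp only [Real.one_rpow, add_comm]
  rw [show -b + 1 = 1 - b by ring] at hint
  push_cast at hint
  have hone : 1 ≤ 1 / (1 - b) := by rw [le_div_iff₀ hb]; linarith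
  rw [hsplit, Nat.cast_add_one, add_comm (N : ℝ) 1]
  push_cast
  calc _ ≤ 1 + (((1 : ℝ) + N) ^ (1 - b) - 1) / (1 - b) := by linarith
    _ ≤ _ := by rw [sub_div]; linarith

lemma sum_erase_nat_dist_le {g : ℕ → ℝ} (hg : ∀ d, 0 ≤ g d) {N n : ℕ} (hn : n < N) :
    ∑ m ∈ (Finset.range N).erase n, g (n.dist m) ≤ 2 * ∑ d ∈ Finset.Icc 1 N, g d := by
  have key : ∀ t : Finset ℕ, Set.InjOn n.dist t → (∀ m ∈ t, n.dist m ∈ Finset.Icc 1 N) →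
      ∑ m ∈ t, g (n.dist m) ≤ ∑ d ∈ Finset.Icc 1 N, g d := fun t hinj hmem ↦ by
    rw [← Finset.sum_image hinj]
    exact Finset.sum_le_sum_of_subset_of_nonneg (Finset.image_subset_iff.2 hmem)
      fun d _ _ ↦ hg d
  rw [← Finset.sum_filter_add_sum_filter_not _ (· < n), two_mul]
  gcongr <;> refine key _ (fun m₁ hm₁ m₂ hm₂ h ↦ ?_) (fun m hm ↦ ?_) <;>
    simp only [Finset.coe_filter, Finset.mem_filter, Finset.mem_erase, Finset.mem_range,
      Finset.mem_Icc, Set.mem_ofPred_eq] at * <;> unfold Nat.dist at * <;> omega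

lemma le_sum_range_of_rpow_neg_le {p : ℕ → ℝ} {c γ : ℝ} (hc : 0 ≤ c) (hγ : 0 ≤ γ)
    (hp0 : ∀ n, 0 ≤ p n) (hp : ∀ n : ℕ, 2 ≤ n → c * (n : ℝ) ^ (-γ) ≤ p n) {N : ℕ} (hN : 4 ≤ N) :
    c / 2 * (N : ℝ) ^ (1 - γ) ≤ ∑ n ∈ Finset.range N, p n := by
  have hNpos : (0 : ℝ) < N := by exact_mod_cast (by omega : 0 < N)
  have hterm : ∀ n ∈ Finset.Ico 2 N, c * (N : ℝ) ^ (-γ) ≤ p n := fun n hn ↦ by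
    obtain ⟨h2n, hnN⟩ := Finset.mem_Ico.1 hn
    refine le_trans (mul_le_mul_of_nonneg_left ?_ hc) (hp n h2n)
    exact Real.rpow_le_rpow_of_nonpos (by exact_mod_cast (by omega : 0 < n))
      (by exact_mod_cast hnN.le) (by linarith)
  have hcard : (N : ℝ) / 2 ≤ ((N - 2 : ℕ) : ℝ) := by
    have h4 : (4 : ℝ) ≤ N := by exact_mod_cast hN
    rw [Nat.cast_sub (by omega), Nat.cast_ofNat]
    linarith
  calc c / 2 * (N : ℝ) ^ (1 - γ) = (N : ℝ) / 2 * (c * (N : ℝ) ^ (-γ)) := by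
        rw [sub_eq_add_neg, Real.rpow_add hNpos, Real.rpow_one]
        ring
    _ ≤ ((N - 2 : ℕ) : ℝ) * (c * (N : ℝ) ^ (-γ)) := by gcongr
    _ = ∑ _n ∈ Finset.Ico 2 N, c * (N : ℝ) ^ (-γ) := by
        rw [Finset.sum_const, Nat.card_Ico, nsmul_eq_mul]
    _ ≤ ∑ n ∈ Finset.Ico 2 N, p n := Finset.sum_le_sum hterm
    _ ≤ ∑ n ∈ Finset.range N, p n :=
        Finset.sum_le_sum_of_subset_of_nonneg
          (fun n hn ↦ Finset.mem_range.2 (Finset.mem_Ico.1 hn).2) fun n _ _ ↦ hp0 n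

lemma exp_neg_mul_div_mul_log {k : ℝ} (hk : k ≠ 0) (a : ℝ) {x : ℝ} (hx : 0 < x) :
    Real.exp (-k * (a / k * Real.log x)) = x ^ (-a) := by
  rw [Real.rpow_def_of_pos hx]
  congr 1
  field_simp

lemma frequently_le_div_log {f : ℕ → ℝ} {c : ℝ} (h : ∃ᶠ n in atTop, f n > c * Real.log n) :
    ∃ᶠ n in atTop, c ≤ f n / Real.log n :=
  (h.and_eventually (eventually_ge_atTop 2)).mono fun n ⟨hn, h2⟩ ↦
    (le_div_iff₀ (Real.log_pos (by exact_mod_cast h2))).2 hn.le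

lemma isBoundedUnder_le_div_log {f : ℕ → ℝ} {c : ℝ} (h : ∀ᶠ n in atTop, f n ≤ c * Real.log n) :
    IsBoundedUnder (· ≤ ·) atTop fun n ↦ f n / Real.log n :=
  ⟨c, eventually_map.2 <| (h.and (eventually_ge_atTop 2)).mono fun n ⟨hn, h2⟩ ↦
    (div_le_iff₀ (Real.log_pos (by exact_mod_cast h2))).2 hn⟩

lemma ae_eventually_notMem_of_summable {Ω : Type*} [MeasurableSpace Ω] {μ : Measure Ω}
    [IsFiniteMeasure μ] {s : ℕ → Set Ω} {f : ℕ → ℝ} (hf : Summable f)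
    (hs : ∀ᶠ n in atTop, μ.real (s n) ≤ f n) : ∀ᵐ x ∂μ, ∀ᶠ n in atTop, x ∉ s n := by
  obtain ⟨M, hM⟩ := eventually_atTop.1 hs
  have hbound : ∀ n, μ (if M ≤ n then s n else ∅) ≤ ENNReal.ofReal (f n) := fun n ↦ by
    split_ifs with hn
    · rw [← ofReal_measureReal]
      exact ENNReal.ofReal_le_ofReal (hM n hn)
    · simp
  filter_upwards [ae_eventually_notMem
    (ne_top_of_le_ne_top hf.tsum_ofReal_ne_top (ENNReal.tsum_le_tsum hbound))] with x hx
  filter_upwards [hx, eventually_ge_atTop M] with n hn hMn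
  simpa [hMn] using hn

section VisitCount

variable {Ω : Type*} {A : ℕ → Set Ω}

noncomputable def visitCount (A : ℕ → Set Ω) (N : ℕ) : Ω → ℝ :=
  ∑ n ∈ Finset.range N, (A n).indicator 1

lemma visitCount_apply (N : ℕ) (x : Ω) :
    visitCount A N x = ∑ n ∈ Finset.range N, (A n).indicator 1 x :=
  Finset.sum_apply x _ _

lemma visitCount_le_of_forall_notMem {M : ℕ} {x : Ω} (hx : ∀ n ≥ M, x ∉ A n) (N : ℕ) :
    visitCount A N x ≤ M := by
  have hsupp : ∀ n ∈ Finset.range N, (A n).indicator 1 x ≠ (0 : ℝ) → n < M := fun n _ h ↦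
    not_le.1 fun hn ↦ h (Set.indicator_of_notMem (hx n hn) _)
  calc visitCount A N x
      = ∑ n ∈ Finset.range N with n < M, (A n).indicator (1 : Ω → ℝ) x := by
        rw [visitCount_apply, Finset.sum_filter_of_ne hsupp]
    _ ≤ ((Finset.range N).filter (· < M)).card • (1 : ℝ) :=
        Finset.sum_le_card_nsmul _ _ _ fun n _ ↦ Set.indicator_le_self' (fun _ _ ↦ zero_le_one) x
    _ ≤ M := by
        rw [nsmul_one, Nat.cast_le]
        exact (Finset.card_le_card fun n hn ↦ Finset.mem_range.2 (Finset.mem_filter.1 hn).2).trans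
          (Finset.card_range M).le

variable [MeasurableSpace Ω] {μ : Measure Ω}

lemma memLp_indicator_one [IsFiniteMeasure μ] (p : ENNReal) {s : Set Ω} (hs : MeasurableSet s) :
    MemLp (s.indicator (1 : Ω → ℝ)) p μ :=
  memLp_indicator_const p hs 1 (Or.inr (measure_ne_top μ s))

lemma memLp_visitCount [IsFiniteMeasure μ] (hA : ∀ n, MeasurableSet (A n)) (N : ℕ) :
    MemLp (visitCount A N) 2 μ :=
  memLp_finsetSum' _ fun n _ ↦ memLp_indicator_one 2 (hA n)

lemma integral_visitCount [IsFiniteMeasure μ] (hA : ∀ n, MeasurableSet (A n)) (N : ℕ) :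
    μ[visitCount A N] = ∑ n ∈ Finset.range N, μ.real (A n) := by
  simp only [visitCount_apply]
  rw [integral_finsetSum _ fun n _ ↦ (memLp_indicator_one 1 (hA n)).integrable le_rfl]
  exact Finset.sum_congr rfl fun n _ ↦ integral_indicator_one (hA n)

variable [IsProbabilityMeasure μ]

lemma covariance_indicator_one {s t : Set Ω} (hs : MeasurableSet s) (ht : MeasurableSet t) :
    cov[s.indicator 1, t.indicator 1; μ] = μ.real (s ∩ t) - μ.real s * μ.real t := by
  rw [covariance_eq_sub (memLp_indicator_one 2 hs) (memLp_indicator_one 2 ht),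
    ← Set.inter_indicator_one, integral_indicator_one (hs.inter ht), integral_indicator_one hs,
    integral_indicator_one ht]

lemma variance_visitCount (hA : ∀ n, MeasurableSet (A n)) (N : ℕ) :
    Var[visitCount A N; μ] = ∑ n ∈ Finset.range N, ∑ m ∈ Finset.range N,
      (μ.real (A n ∩ A m) - μ.real (A n) * μ.real (A m)) := by
  rw [visitCount, variance_sum' fun n _ ↦ memLp_indicator_one 2 (hA n)]
  simp only [covariance_indicator_one (hA _) (hA _)]

lemma measureReal_visitCount_lt_half_le (hA : ∀ n, MeasurableSet (A n)) {N : ℕ}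
    (hE : 0 < ∑ n ∈ Finset.range N, μ.real (A n)) :
    μ.real {x | visitCount A N x < (∑ n ∈ Finset.range N, μ.real (A n)) / 2} ≤
      4 * Var[visitCount A N; μ] / (∑ n ∈ Finset.range N, μ.real (A n)) ^ 2 := by
  set E := ∑ n ∈ Finset.range N, μ.real (A n)
  have hsub : {x | visitCount A N x < E / 2} ⊆
      {x | E / 2 ≤ |visitCount A N x - μ[visitCount A N]|} := fun x hx ↦ by
    have hx : visitCount A N x < E / 2 := hx
    change E / 2 ≤ |_|
    rw [integral_visitCount hA, abs_sub_comm]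
    exact le_abs.2 (Or.inl (by linarith))
  refine (measureReal_mono hsub).trans (ENNReal.toReal_le_of_le_ofReal
    (div_nonneg (mul_nonneg zero_le_four (variance_nonneg _ _)) (sq_nonneg _)) ?_)
  refine (meas_ge_le_variance_div_sq (memLp_visitCount hA N) (half_pos hE)).trans_eq ?_
  congr 1
  field_simp
  ring

lemma variance_visitCount_le (hA : ∀ n, MeasurableSet (A n)) {b C : ℝ} (hb0 : 0 ≤ b)
    (hb1 : b < 1) (hC : 0 ≤ C)
    (hcov : ∀ n d, 0 < d →
      μ.real (A n ∩ A (n + d)) - μ.real (A n) * μ.real (A (n + d)) ≤ C * (d : ℝ) ^ (-b))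
    (N : ℕ) : Var[visitCount A N; μ] ≤ (1 + 2 * C / (1 - b)) * (N : ℝ) ^ (2 - b) := by
  set cov := fun n m ↦ μ.real (A n ∩ A m) - μ.real (A n) * μ.real (A m)
  have hdiag : ∀ n, cov n n ≤ 1 := fun n ↦ by
    simp only [cov, Set.inter_self]
    nlinarith [measureReal_nonneg (μ := μ) (s := A n), measureReal_le_one (μ := μ) (s := A n)]
  have hoff : ∀ n m, n ≠ m → cov n m ≤ C * (n.dist m : ℝ) ^ (-b) := fun n m hnm ↦ by
    rcases lt_or_gt_of_ne hnm with h | h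
    · have := hcov n (m - n) (Nat.sub_pos_of_lt h)
      rwa [Nat.add_sub_cancel' h.le, ← Nat.dist_eq_sub_of_le h.le] at this
    · have := hcov m (n - m) (Nat.sub_pos_of_lt h)
      rw [Nat.add_sub_cancel' h.le, ← Nat.dist_eq_sub_of_le_right h.le] at this
      simpa only [cov, Set.inter_comm, mul_comm] using this
  have hrow : ∀ n ∈ Finset.range N, ∑ m ∈ Finset.range N, cov n m ≤
      1 + C * (2 * ((N : ℝ) ^ (1 - b) / (1 - b))) := fun n hn ↦ by
    rw [← Finset.add_sum_erase _ _ hn]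
    calc cov n n + ∑ m ∈ (Finset.range N).erase n, cov n m
        ≤ 1 + ∑ m ∈ (Finset.range N).erase n, C * (n.dist m : ℝ) ^ (-b) :=
          add_le_add (hdiag n)
            (Finset.sum_le_sum fun m hm ↦ hoff n m (Finset.ne_of_mem_erase hm).symm)
      _ ≤ 1 + C * (2 * ∑ d ∈ Finset.Icc 1 N, (d : ℝ) ^ (-b)) := by
          rw [← Finset.mul_sum]
          gcongr
          exact sum_erase_nat_dist_le (g := fun d ↦ (d : ℝ) ^ (-b)) (fun d ↦ by positivity)
            (Finset.mem_range.1 hn)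
      _ ≤ 1 + C * (2 * ((N : ℝ) ^ (1 - b) / (1 - b))) := by
          gcongr
          exact sum_Icc_rpow_neg_le hb0 hb1 N
  have hpow : (N : ℝ) * (N : ℝ) ^ (1 - b) = (N : ℝ) ^ (2 - b) := by
    rw [← Real.rpow_one_add' (Nat.cast_nonneg N) (by linarith)]
    ring_nf
  have hN : (N : ℝ) ≤ (N : ℝ) ^ (2 - b) := by
    rcases Nat.eq_zero_or_pos N with rfl | hN
    · simpa using Real.rpow_nonneg le_rfl _
    · exact Real.self_le_rpow_of_one_le (by exact_mod_cast hN) (by linarith)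
  rw [variance_visitCount hA]
  calc ∑ n ∈ Finset.range N, ∑ m ∈ Finset.range N, cov n m
      ≤ ∑ _n ∈ Finset.range N, (1 + C * (2 * ((N : ℝ) ^ (1 - b) / (1 - b)))) :=
        Finset.sum_le_sum hrow
    _ = N + 2 * C / (1 - b) * ((N : ℝ) * (N : ℝ) ^ (1 - b)) := by
        rw [Finset.sum_const, Finset.card_range, nsmul_eq_mul]
        ring
    _ ≤ (1 + 2 * C / (1 - b)) * (N : ℝ) ^ (2 - b) := by
        rw [hpow]
        linarith

theorem ae_frequently_mem_of_tendsto_variance_div_sq (hA : ∀ n, MeasurableSet (A n))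
    (hE : Tendsto (fun N ↦ ∑ n ∈ Finset.range N, μ.real (A n)) atTop atTop)
    (hvar : Tendsto (fun N ↦ Var[visitCount A N; μ] / (∑ n ∈ Finset.range N, μ.real (A n)) ^ 2)
      atTop (𝓝 0)) :
    ∀ᵐ x ∂μ, ∃ᶠ n in atTop, x ∈ A n := by
  set E := fun N ↦ ∑ n ∈ Finset.range N, μ.real (A n)
  have hsel : ∀ j : ℕ, ∃ N, (j : ℝ) ≤ E N ∧
      μ.real {x | visitCount A N x < E N / 2} ≤ (1 / 2) ^ j := fun j ↦ by
    obtain ⟨N, hjN, hpos, hN⟩ := ((hE.eventually_ge_atTop j).and ((hE.eventually_gt_atTop 0).and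
      (hvar.eventually (ge_mem_nhds (by positivity : (0 : ℝ) < (1 / 2) ^ j / 4))))).exists
    refine ⟨N, hjN, (measureReal_visitCount_lt_half_le hA hpos).trans ?_⟩
    rw [mul_div_assoc]
    linarith
  choose N hjN hN using hsel
  filter_upwards [ae_eventually_notMem_of_summable summable_geometric_two
    (Eventually.of_forall hN)] with x hx hfinite
  obtain ⟨M, hM⟩ := eventually_atTop.1 hfinite
  obtain ⟨j, hj, hjM⟩ := (hx.and (eventually_gt_atTop (2 * M))).exists
  have hcount := visitCount_le_of_forall_notMem hM (N j)
  have hj' : E (N j) / 2 ≤ visitCount A (N j) x := not_lt.1 hj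
  have : (2 * M : ℝ) < j := by exact_mod_cast hjM
  linarith [hjN j]

theorem ae_frequently_mem_of_abs_covariance_le (hA : ∀ n, MeasurableSet (A n)) {c γ β C : ℝ}
    (hc : 0 < c) (hγ : 0 ≤ γ) (hγβ : 2 * γ < β) (hβ1 : β < 1) (hC : 0 ≤ C)
    (hp : ∀ n : ℕ, 2 ≤ n → c * (n : ℝ) ^ (-γ) ≤ μ.real (A n))
    (hcov : ∀ n m, 0 < m →
      |μ.real (A n ∩ A (n + m)) - μ.real (A n) * μ.real (A (n + m))| ≤
        C * μ.real (A n) * μ.real (A (n + m)) * (m : ℝ) ^ (-β)) :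
    ∀ᵐ x ∂μ, ∃ᶠ n in atTop, x ∈ A n := by
  set E := fun N ↦ ∑ n ∈ Finset.range N, μ.real (A n)
  set K := 1 + 2 * C / (1 - β)
  have hK : 0 ≤ K := add_nonneg zero_le_one (div_nonneg (by positivity) (by linarith))
  have hElow : ∀ N : ℕ, 4 ≤ N → c / 2 * (N : ℝ) ^ (1 - γ) ≤ E N := fun N hN ↦
    le_sum_range_of_rpow_neg_le hc.le hγ (fun _ ↦ measureReal_nonneg) hp hN
  have hvar : ∀ N, Var[visitCount A N; μ] ≤ K * (N : ℝ) ^ (2 - β) :=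
    variance_visitCount_le hA (by linarith) hβ1 hC fun n m hm ↦
      calc _ ≤ C * μ.real (A n) * μ.real (A (n + m)) * (m : ℝ) ^ (-β) :=
            (le_abs_self _).trans (hcov n m hm)
        _ ≤ C * 1 * 1 * (m : ℝ) ^ (-β) := by gcongr <;> exact measureReal_le_one
        _ = C * (m : ℝ) ^ (-β) := by ring
  have hratio : ∀ N : ℕ, 4 ≤ N → Var[visitCount A N; μ] / E N ^ 2 ≤
      K / (c / 2) ^ 2 * (N : ℝ) ^ (-(β - 2 * γ)) := fun N hN ↦ by
    have hNpos : (0 : ℝ) < N := by exact_mod_cast (by omega : 0 < N)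
    have hsq : (c / 2 * (N : ℝ) ^ (1 - γ)) ^ 2 = (c / 2) ^ 2 * (N : ℝ) ^ (2 - 2 * γ) := by
      rw [mul_pow, ← Real.rpow_natCast ((N : ℝ) ^ (1 - γ)), ← Real.rpow_mul hNpos.le]
      ring_nf
    calc Var[visitCount A N; μ] / E N ^ 2
        ≤ K * (N : ℝ) ^ (2 - β) / (c / 2 * (N : ℝ) ^ (1 - γ)) ^ 2 := by
          refine div_le_div₀ (by positivity) (hvar N) (by positivity) ?_
          exact pow_le_pow_left₀ (by positivity) (hElow N hN) 2
      _ = K / (c / 2) ^ 2 * (N : ℝ) ^ (-(β - 2 * γ)) := by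
          rw [hsq, mul_div_mul_comm, ← Real.rpow_sub hNpos]
          ring_nf
  have hpow : Tendsto (fun N : ℕ ↦ (N : ℝ) ^ (-(β - 2 * γ))) atTop (𝓝 0) :=
    (tendsto_rpow_neg_atTop (by linarith)).comp tendsto_natCast_atTop_atTop
  refine ae_frequently_mem_of_tendsto_variance_div_sq hA ?_ ?_
  · refine tendsto_atTop_mono' _ ((eventually_ge_atTop 4).mono hElow) ?_
    exact ((tendsto_rpow_atTop (by linarith)).comp tendsto_natCast_atTop_atTop).const_mul_atTop
      (half_pos hc)
  · refine squeeze_zero'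
      (Eventually.of_forall fun N ↦ div_nonneg (variance_nonneg _ _) (sq_nonneg _))
      ((eventually_ge_atTop 4).mono hratio) ?_
    simpa using hpow.const_mul (K / (c / 2) ^ 2)

end VisitCount

section Excursions

variable {X : Type*} [MetricSpace X] [MeasurableSpace X] [BorelSpace X] {μ : Measure X}
  {T : X → X} {y : X} {k : ℝ}

def excursionSet (T : X → X) (y : X) (r : ℝ) (n : ℕ) : Set X :=
  T^[n] ⁻¹' {x | dist x y > r}

lemma measurableSet_dist_gt (y : X) (r : ℝ) : MeasurableSet {x | dist x y > r} :=
  (isOpen_lt continuous_const (continuous_id.dist continuous_const)).measurableSet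

lemma measurableSet_excursionSet (hT : Measurable T) (r : ℝ) (n : ℕ) :
    MeasurableSet (excursionSet T y r n) :=
  hT.iterate n (measurableSet_dist_gt y r)

lemma measureReal_excursionSet (hT : MeasurePreserving T μ μ) (r : ℝ) (n : ℕ) :
    μ.real (excursionSet T y r n) = μ.real {x | dist x y > r} :=
  (hT.iterate n).measureReal_preimage (measurableSet_dist_gt y r).nullMeasurableSet

lemma le_measureReal_excursionSet (hk : 0 < k) {C₁ γ : ℝ}
    (htail : ∀ t > (0 : ℝ), C₁ * Real.exp (-k * t) ≤ μ.real {x | dist x y > t})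
    (hT : MeasurePreserving T μ μ) (hγ : 0 < γ) {n : ℕ} (hn : 2 ≤ n) :
    C₁ * (n : ℝ) ^ (-γ) ≤ μ.real (excursionSet T y (γ / k * Real.log n) n) := by
  have hlog : 0 < Real.log n := Real.log_pos (by exact_mod_cast hn)
  rw [measureReal_excursionSet hT, ← exp_neg_mul_div_mul_log hk.ne' γ (by positivity)]
  exact htail _ (by positivity)

lemma ae_eventually_dist_iterate_le [IsFiniteMeasure μ] (hk : 0 < k) {C₂ : ℝ}
    (htail : ∀ t > (0 : ℝ), μ.real {x | dist x y > t} ≤ C₂ * Real.exp (-k * t))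
    (hT : MeasurePreserving T μ μ) :
    ∀ᵐ x ∂μ, ∀ᶠ n : ℕ in atTop, dist (T^[n] x) y ≤ 2 / k * Real.log n := by
  have hsum : Summable fun n : ℕ ↦ C₂ * (n : ℝ) ^ (-2 : ℝ) :=
    (Real.summable_nat_rpow.2 (by norm_num)).mul_left C₂
  refine (ae_eventually_notMem_of_summable (s := fun n ↦ excursionSet T y (2 / k * Real.log n) n)
    hsum ?_).mono fun x hx ↦ hx.mono fun n hn ↦ not_lt.1 hn
  filter_upwards [eventually_ge_atTop 2] with n hn
  have hlog : 0 < Real.log n := Real.log_pos (by exact_mod_cast hn)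
  rw [measureReal_excursionSet hT, ← exp_neg_mul_div_mul_log hk.ne' 2 (by positivity)]
  exact htail _ (by positivity)

end Excursions

theorem log_law_lower_bound_general
    {X : Type*} [MetricSpace X] [MeasurableSpace X] [BorelSpace X]
    (μ : Measure X) [IsProbabilityMeasure μ]
    (y : X) (k C₁ C₂ : ℝ) (hk : 0 < k) (hC₁ : 0 < C₁)
    (htail : ∀ t > (0 : ℝ),
      C₁ * Real.exp (-k * t) ≤ (μ {x | dist x y > t}).toReal ∧
      (μ {x | dist x y > t}).toReal ≤ C₂ * Real.exp (-k * t))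
    (T : X → X) (hT : MeasurePreserving T μ μ)
    (β C : ℝ) (hβ : 0 < β) (hβ1 : β < 1) (hC : 0 < C)
    (hcorr : ∀ γ : ℝ, 0 < γ → γ < β / 2 → ∀ m > 0, ∀ n : ℕ,
      |(μ ((fun x => T^[n] x) ⁻¹' {x | dist x y > (γ / k) * Real.log n} ∩
            (fun x => T^[n + m] x) ⁻¹' {x | dist x y > (γ / k) * Real.log (n + m)})).toReal -
          (μ ((fun x => T^[n] x) ⁻¹' {x | dist x y > (γ / k) * Real.log n})).toReal *
            (μ ((fun x => T^[n + m] x) ⁻¹' {x | dist x y > (γ / k) * Real.log (n + m)})).toReal| ≤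
        C * (μ ((fun x => T^[n] x) ⁻¹' {x | dist x y > (γ / k) * Real.log n})).toReal *
          (μ ((fun x => T^[n + m] x) ⁻¹' {x | dist x y > (γ / k) * Real.log (n + m)})).toReal *
          (m : ℝ) ^ (-β)) :
    ∀ᵐ x ∂μ,
      Filter.limsup (fun n : ℕ => dist (T^[n] x) y / Real.log n) atTop ≥ β / (2 * k) := by
  obtain ⟨u, -, hu, hu_lim⟩ := exists_seq_strictMono_tendsto' (half_pos hβ)
  have hfreq : ∀ j, ∀ᵐ x ∂μ, ∃ᶠ n : ℕ in atTop, x ∈ excursionSet T y (u j / k * Real.log n) n :=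
    fun j ↦ by
      obtain ⟨hγ, hγβ⟩ := hu j
      exact ae_frequently_mem_of_abs_covariance_le
        (fun n ↦ measurableSet_excursionSet hT.measurable _ n) hC₁ hγ.le (by linarith) hβ1 hC.le
        (fun n hn ↦ le_measureReal_excursionSet hk (fun t ht ↦ (htail t ht).1) hT hγ hn)
        (fun n m hm ↦ by simpa [excursionSet, measureReal_def] using hcorr _ hγ hγβ m hm n)
  filter_upwards [ae_all_iff.2 hfreq,
    ae_eventually_dist_iterate_le hk (fun t ht ↦ (htail t ht).2) hT] with x hx hbdd
  rw [ge_iff_le, ← div_div]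
  exact le_of_tendsto' (hu_lim.div_const k) fun j ↦
    le_limsup_of_frequently_le (frequently_le_div_log (hx j)) (isBoundedUnder_le_div_log hbdd)

/-- Lower bound half of the unipotent logarithm law: exponential cusp tail plus
polynomial decay of correlations of the excursion events with exponent `β`
gives `limsup d(T^n x, y)/log n ≥ β/(2k)` a.e. -/
theorem log_law_lower_bound
    {X : Type*} [MetricSpace X] [MeasurableSpace X] [BorelSpace X]
    (μ : Measure X) [IsProbabilityMeasure μ]
    (y : X) (k C₁ C₂ : ℝ) (hk : 0 < k) (hC₁ : 0 < C₁) (hC₂ : 0 < C₂)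
    (htail : ∀ t > (0 : ℝ),
      C₁ * Real.exp (-k * t) ≤ (μ {x | dist x y > t}).toReal ∧
      (μ {x | dist x y > t}).toReal ≤ C₂ * Real.exp (-k * t))
    (T : X → X) (hT : MeasurePreserving T μ μ) (herg : Ergodic T μ)
    (β C : ℝ) (hβ : 0 < β) (hβ1 : β < 1) (hC : 0 < C)
    (hcorr : ∀ γ : ℝ, 0 < γ → γ < β / 2 → ∀ m > 0, ∀ n : ℕ,
      |(μ ((fun x => T^[n] x) ⁻¹' {x | dist x y > (γ / k) * Real.log n} ∩
            (fun x => T^[n + m] x) ⁻¹' {x | dist x y > (γ / k) * Real.log (n + m)})).toReal -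
          (μ ((fun x => T^[n] x) ⁻¹' {x | dist x y > (γ / k) * Real.log n})).toReal *
            (μ ((fun x => T^[n + m] x) ⁻¹' {x | dist x y > (γ / k) * Real.log (n + m)})).toReal| ≤
        C * (μ ((fun x => T^[n] x) ⁻¹' {x | dist x y > (γ / k) * Real.log n})).toReal *
          (μ ((fun x => T^[n + m] x) ⁻¹' {x | dist x y > (γ / k) * Real.log (n + m)})).toReal *
          (m : ℝ) ^ (-β)) :
    ∀ᵐ x ∂μ,
      Filter.limsup (fun n : ℕ => dist (T^[n] x) y / Real.log n) atTop ≥ β / (2 * k) :=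
  log_law_lower_bound_general μ y k C₁ C₂ hk hC₁ htail T hT β C hβ hβ1 hC hcorr
end

section
/- Let k > 0 and let A_t ⊆ X be a family of measurable sets in a probability space with C₁ e^{−kt} ≤ μ(A_t) ≤ C₂ e^{−kt} and A_s ⊇ A_t for s ≤ t. Let T be μ-preserving and for a measurable function F : X → [0,∞) with A_t = {F > t}, define L(x) = limsup_n F(T^n x)/log n. Then L(x) ≤ 1/k for μ-a.e. x. -/
open MeasureTheory Filter Real
open scoped ENNReal

/-! For every `c > 1/k` the tail bound gives `μ {F ∘ T^[n] > c log n} ≤ C₂ n^(-k c)`, which is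
summable, so by Borel–Cantelli almost every orbit eventually satisfies `F (T^[n] x) ≤ c log n`.
Intersecting these full-measure sets over rational `c > 1/k` gives the bound `1/k`. -/

namespace MeasureTheory

variable {α : Type*} [MeasurableSpace α] {μ : Measure α}

theorem ae_le_of_forall_lt_ae_le {f : α → ℝ} {a : ℝ} (h : ∀ c, a < c → ∀ᵐ x ∂μ, f x ≤ c) :
    ∀ᵐ x ∂μ, f x ≤ a := by
  have hrat : ∀ᵐ x ∂μ, ∀ q : ℚ, a < q → f x ≤ q := by
    refine ae_all_iff.2 fun q => ?_
    by_cases hq : a < q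
    · filter_upwards [h q hq] with x hx using fun _ => hx
    · exact Eventually.of_forall fun _ hq' => absurd hq' hq
  filter_upwards [hrat] with x hx using le_of_forall_lt_rat_imp_le hx

theorem ae_limsup_div_log_le {g : ℕ → α → ℝ} (hg : ∀ n x, 0 ≤ g n x) {c : ℝ}
    (hsum : ∑' n : ℕ, μ {x | c * log n < g n x} ≠ ∞) :
    ∀ᵐ x ∂μ, limsup (fun n : ℕ => g n x / log n) atTop ≤ c := by
  filter_upwards [ae_eventually_notMem hsum] with x hx
  have hcobdd : IsCoboundedUnder (· ≤ ·) atTop (fun n : ℕ => g n x / log n) :=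
    isCoboundedUnder_le_of_le atTop fun n => div_nonneg (hg n x) (log_natCast_nonneg n)
  refine limsup_le_of_le hcobdd ?_
  filter_upwards [hx, eventually_ge_atTop 2] with n hn hn2
  have hlog : 0 < log n := log_pos (by exact_mod_cast hn2)
  exact (div_le_iff₀ hlog).2 (not_lt.1 hn)

theorem measure_lt_mul_log_le_rpow {F : α → ℝ} {k C c : ℝ}
    (htail : ∀ t > (0 : ℝ), (μ {x | F x > t}).toReal ≤ C * exp (-k * t))
    (hc : 0 < c) {n : ℕ} (hn : 2 ≤ n) :
    (μ {x | c * log n < F x}).toReal ≤ C * (n : ℝ) ^ (-(k * c)) := by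
  have hlog : 0 < log n := log_pos (by exact_mod_cast hn)
  calc (μ {x | c * log n < F x}).toReal ≤ C * exp (-k * (c * log n)) :=
        htail _ (mul_pos hc hlog)
    _ = C * (n : ℝ) ^ (-(k * c)) := by
        rw [rpow_def_of_pos (by positivity)]
        ring_nf

theorem tsum_measure_lt_mul_log_ne_top [IsFiniteMeasure μ] {F : α → ℝ} {k C c : ℝ}
    (htail : ∀ t > (0 : ℝ), (μ {x | F x > t}).toReal ≤ C * exp (-k * t))
    (hk : 0 < k) (hkc : 1 < k * c) :
    ∑' n : ℕ, μ {x | c * log n < F x} ≠ ∞ := by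
  have hc : 0 < c := pos_of_mul_pos_right (one_pos.trans hkc) hk.le
  have hsummable : Summable fun n : ℕ => (μ {x | c * log n < F x}).toReal := by
    refine Summable.of_norm_bounded_eventually_nat
      ((summable_nat_rpow.2 (by linarith : -(k * c) < -1)).mul_left C) ?_
    filter_upwards [eventually_ge_atTop 2] with n hn
    rw [Real.norm_of_nonneg ENNReal.toReal_nonneg]
    exact measure_lt_mul_log_le_rpow htail hc hn
  simpa only [ENNReal.ofReal_toReal (measure_ne_top μ _)] using hsummable.tsum_ofReal_ne_top

end MeasureTheory

theorem abstract_log_law_upper_general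
    {X : Type*} [MeasurableSpace X]
    (μ : Measure X) [IsProbabilityMeasure μ]
    (F : X → ℝ) (hF0 : ∀ x, 0 ≤ F x)
    (k C₁ C₂ : ℝ) (hk : 0 < k)
    (htail : ∀ t > (0 : ℝ),
      C₁ * Real.exp (-k * t) ≤ (μ {x | F x > t}).toReal ∧
      (μ {x | F x > t}).toReal ≤ C₂ * Real.exp (-k * t))
    (T : X → X) (hT : MeasurePreserving T μ μ) :
    ∀ᵐ x ∂μ,
      Filter.limsup (fun n : ℕ => F (T^[n] x) / Real.log n) atTop ≤ 1 / k := by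
  refine ae_le_of_forall_lt_ae_le fun c hc => ae_limsup_div_log_le (fun n x => hF0 _) ?_
  have hkc : 1 < k * c := by rwa [div_lt_iff₀' hk] at hc
  refine ne_top_of_le_ne_top
    (tsum_measure_lt_mul_log_ne_top (fun t ht => (htail t ht).2) hk hkc) ?_
  exact ENNReal.tsum_le_tsum fun n => (hT.iterate n).measure_preimage_le {x | c * log n < F x}

/-- Abstract easy half of the Kleinbock–Margulis logarithm law: if the
super-level sets of `F` have exponentially decaying measure and `T` preserves
`μ`, then `limsup F(T^n x)/log n ≤ 1/k` almost everywhere. -/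
theorem abstract_log_law_upper
    {X : Type*} [MeasurableSpace X]
    (μ : Measure X) [IsProbabilityMeasure μ]
    (F : X → ℝ) (hF : Measurable F) (hF0 : ∀ x, 0 ≤ F x)
    (k C₁ C₂ : ℝ) (hk : 0 < k) (hC₁ : 0 < C₁) (hC₂ : 0 < C₂)
    (htail : ∀ t > (0 : ℝ),
      C₁ * Real.exp (-k * t) ≤ (μ {x | F x > t}).toReal ∧
      (μ {x | F x > t}).toReal ≤ C₂ * Real.exp (-k * t))
    (T : X → X) (hT : MeasurePreserving T μ μ) :
    ∀ᵐ x ∂μ,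
      Filter.limsup (fun n : ℕ => F (T^[n] x) / Real.log n) atTop ≤ 1 / k :=
  abstract_log_law_upper_general μ F hF0 k C₁ C₂ hk htail T hT
end
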